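/- arXiv:0906.3849 — 2 statements merged into one kernel-verified Lean document; each statement's English description precedes it below -/
import Mathlib

section
/- (Monotonic convergence of the doubly squeezed Arimoto–Blahut algorithm.) Let V be an m×n row-stochastic matrix, f a nonnegative 1×n vector, c ∈ ℝ^m, and r a nonnegative 1×m vector with r_+ := Σ_i r_i < 1. Assume that for every j, either f_j > 0 or the j-th column of V is not identically zero. Let p^{(0)} ∈ Ω(r) have all entries positive, and for t ≥ 0 define Φ^{(t)}_{ji} := p^{(t)}_i V_{ij}/(f_j + (p^{(t)}V)_j) and p^{(t+1)}_i := max{r_i, α^{(t)}·exp(c_i + Σ_j V_{ij} log Φ^{(t)}_{ji})} (terms with V_{ij} = 0 omitted from the exponent), where α^{(t)} > 0 is chosen so that Σ_i p^{(t+1)}_i = 1. Then the limit p^{(∞)} := lim_{t→∞} p^{(t)} exists, and the sequence I(p^{(t)}|V,f,c) is nondecreasing in t and converges to sup_{p ∈ Ω(r)} I(p|V,f,c). -/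
open Finset

/-- Entropy with the convention `0 * log 0 = 0` (automatic since `Real.log 0 = 0`). -/
noncomputable def Hent {k : ℕ} (q : Fin k → ℝ) : ℝ := -∑ j, q j * Real.log (q j)

/-- `I(p|V,f,c) = H(pV + f) + ∑ i p_i (c_i − H(V_i)) − H(f)`. -/
noncomputable def Ifun {m n : ℕ} (V : Matrix (Fin m) (Fin n) ℝ)
    (f : Fin n → ℝ) (c : Fin m → ℝ) (p : Fin m → ℝ) : ℝ :=
  Hent (fun j => (∑ i, p i * V i j) + f j)
    + ∑ i, p i * (c i - Hent (fun j => V i j)) - Hent f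

/-!
The update is a mirror-ascent step for `I` with the relative entropy
`D(q‖p) = ∑ᵢ qᵢ (log qᵢ - log pᵢ)` as distance. Rewrite `I` in terms of the exponent `aᵢ` of
the update. The log-sum inequality (data processing through `V`), together with the inequality
`∑ᵢ qᵢ (aᵢ - log qᵢ) + D(q‖p') ≤ ∑ᵢ p'ᵢ (aᵢ - log p'ᵢ)` on `Ω(r)` for the squeezed Gibbs vector
`p' = max (rᵢ, α e^{aᵢ})`, gives the three-point inequality
  `I(q) ≤ I(p⁽ᵗ⁺¹⁾) + D(q‖p⁽ᵗ⁾) - D(q‖p⁽ᵗ⁺¹⁾)`  for all `q ∈ Ω(r)`.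
Taking `q = p⁽ᵗ⁾` gives monotonicity, and telescoping gives `I(q) ≤ lim I(p⁽ᵗ⁾)`. A cluster point
`p*` of the iterates therefore maximises `I`, so `D(p*‖p⁽ᵗ⁾)` is nonincreasing; it tends to `0`
along a subsequence, hence along the whole sequence, and since `D` dominates the squared Hellinger
distance the iterates converge to `p*`.
-/

open Filter Topology Real Matrix

section ThreePoint

variable {X : Type*} {F : X → ℝ} {D : X → X → ℝ} {S : Set X} {p : ℕ → X}

theorem monotone_of_three_point (hpS : ∀ t, p t ∈ S) (hDself : ∀ t, D (p t) (p t) = 0)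
    (hD0 : ∀ q ∈ S, ∀ t, 0 ≤ D q (p t))
    (hstep : ∀ q ∈ S, ∀ t, F q ≤ F (p (t + 1)) + D q (p t) - D q (p (t + 1))) :
    Monotone fun t => F (p t) :=
  monotone_nat_of_le_succ fun t => by
    show F (p t) ≤ F (p (t + 1))
    have := hstep _ (hpS t) t
    linarith [hDself t, hD0 _ (hpS t) (t + 1)]

theorem le_of_three_point {L : ℝ} (hL : ∀ t, F (p t) ≤ L) (hD0 : ∀ q ∈ S, ∀ t, 0 ≤ D q (p t))
    (hstep : ∀ q ∈ S, ∀ t, F q ≤ F (p (t + 1)) + D q (p t) - D q (p (t + 1)))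
    {q : X} (hq : q ∈ S) : F q ≤ L := by
  have hdecay : ∀ t : ℕ, t * (F q - L) ≤ D q (p 0) - D q (p t) := by
    intro t
    induction t with
    | zero => simp
    | succ t ih =>
      push_cast
      linarith [hstep q hq t, hL (t + 1)]
  by_contra! hlt
  obtain ⟨T, hT⟩ := exists_nat_gt (D q (p 0) / (F q - L))
  rw [div_lt_iff₀ (sub_pos.2 hlt)] at hT
  linarith [hdecay T, hD0 q hq T]

theorem exists_tendsto_of_three_point [TopologicalSpace X] [FirstCountableTopology X]
    (hS : IsCompact S) (hF : ContinuousOn F S) (hpS : ∀ t, p t ∈ S)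
    (hmono : Monotone fun t => F (p t))
    (hstep : ∀ q ∈ S, ∀ t, F q ≤ F (p (t + 1)) + D q (p t) - D q (p (t + 1)))
    (hDcont : ∀ q ∈ S, Tendsto (D q) (𝓝 q) (𝓝 0))
    (hDsep : ∀ q ∈ S, Tendsto (fun t => D q (p t)) atTop (𝓝 0) → Tendsto p atTop (𝓝 q)) :
    ∃ x ∈ S, Tendsto p atTop (𝓝 x) ∧ Tendsto (fun t => F (p t)) atTop (𝓝 (F x)) := by
  obtain ⟨x, hxS, φ, hφ, hpφ⟩ := hS.tendsto_subseq hpS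
  have hFφ : Tendsto (fun k => F (p (φ k))) atTop (𝓝 (F x)) :=
    (hF x hxS).tendsto.comp (tendsto_nhdsWithin_iff.2 ⟨hpφ, .of_forall fun k => hpS (φ k)⟩)
  have hFp : Tendsto (fun t => F (p t)) atTop (𝓝 (F x)) :=
    (tendsto_iff_tendsto_subseq_of_monotone hmono hφ.tendsto_atTop).2 hFφ
  -- `F (p t) ≤ F x`, so the step inequality at `q = x` makes `D x (p t)` decrease.
  have hanti : Antitone fun t => D x (p t) := antitone_nat_of_succ_le fun t => by
    have hFx : F (p (t + 1)) ≤ F x := hmono.ge_of_tendsto hFp (t + 1)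
    linarith [hstep x hxS t]
  have hDφ : Tendsto ((fun t => D x (p t)) ∘ φ) atTop (𝓝 0) := (hDcont x hxS).comp hpφ
  exact ⟨x, hxS, hDsep x hxS <|
    (tendsto_iff_tendsto_subseq_of_antitone hanti hφ.tendsto_atTop).2 hDφ, hFp⟩

theorem three_point_convergence [TopologicalSpace X] [FirstCountableTopology X]
    (hS : IsCompact S) (hF : ContinuousOn F S) (hpS : ∀ t, p t ∈ S)
    (hDself : ∀ t, D (p t) (p t) = 0) (hD0 : ∀ q ∈ S, ∀ t, 0 ≤ D q (p t))
    (hstep : ∀ q ∈ S, ∀ t, F q ≤ F (p (t + 1)) + D q (p t) - D q (p (t + 1)))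
    (hDcont : ∀ q ∈ S, Tendsto (D q) (𝓝 q) (𝓝 0))
    (hDsep : ∀ q ∈ S, Tendsto (fun t => D q (p t)) atTop (𝓝 0) → Tendsto p atTop (𝓝 q)) :
    (∃ x, Tendsto p atTop (𝓝 x)) ∧ (Monotone fun t => F (p t)) ∧
      Tendsto (fun t => F (p t)) atTop (𝓝 (sSup (F '' S))) := by
  have hmono := monotone_of_three_point hpS hDself hD0 hstep
  obtain ⟨x, hxS, hpx, hFx⟩ := exists_tendsto_of_three_point hS hF hpS hmono hstep hDcont hDsep
  have hmax : IsGreatest (F '' S) (F x) := ⟨Set.mem_image_of_mem F hxS,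
    Set.forall_mem_image.2 fun q hq => le_of_three_point (hmono.ge_of_tendsto hFx) hD0 hstep hq⟩
  exact ⟨⟨x, hpx⟩, hmono, hmax.csSup_eq ▸ hFx⟩

end ThreePoint

theorem sq_sqrt_sub_sqrt_le {x y : ℝ} (hx : 0 ≤ x) (hy : 0 < y) :
    (√x - √y) ^ 2 ≤ x * (log x - log y) - x + y := by
  rcases hx.eq_or_lt with rfl | hx
  · simp [sq_sqrt hy.le]
  set a := √x
  set b := √y
  have ha : 0 < a := sqrt_pos.2 hx
  have hb : 0 < b := sqrt_pos.2 hy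
  have hxa : x = a ^ 2 := (sq_sqrt hx.le).symm
  have hyb : y = b ^ 2 := (sq_sqrt hy.le).symm
  have hlog : log b - log a ≤ b / a - 1 := by
    rw [← log_div hb.ne' ha.ne']; exact log_le_sub_one_of_pos (by positivity)
  have hmul : a ^ 2 * (log b - log a) ≤ a * b - a ^ 2 := by
    calc a ^ 2 * (log b - log a) ≤ a ^ 2 * (b / a - 1) := by gcongr
      _ = a * b - a ^ 2 := by field_simp
  rw [hxa, hyb, log_pow, log_pow]
  push_cast
  nlinarith

section

variable {ι : Type*} [Fintype ι]

noncomputable def relEntropy (q p : ι → ℝ) : ℝ := ∑ i, q i * (log (q i) - log (p i))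

theorem relEntropy_self (p : ι → ℝ) : relEntropy p p = 0 := by simp [relEntropy]

theorem sum_sub_sum_le_relEntropy {q p : ι → ℝ} (hq : ∀ i, 0 ≤ q i) (hp : ∀ i, 0 ≤ p i)
    (hqp : ∀ i, p i = 0 → q i = 0) : ∑ i, q i - ∑ i, p i ≤ relEntropy q p := by
  rw [← sum_sub_distrib]
  refine sum_le_sum fun i _ => ?_
  rcases (hp i).eq_or_lt with h | h
  · simp [← h, hqp i h.symm]
  · linarith [sq_sqrt_sub_sqrt_le (hq i) h, sq_nonneg (√(q i) - √(p i))]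

theorem relEntropy_nonneg {q p : ι → ℝ} (hq : ∀ i, 0 ≤ q i) (hp : ∀ i, 0 < p i)
    (hsum : ∑ i, p i ≤ ∑ i, q i) : 0 ≤ relEntropy q p := by
  linarith [sum_sub_sum_le_relEntropy hq (fun i => (hp i).le) fun i h => absurd h (hp i).ne']

theorem sum_sq_sqrt_sub_sqrt_le_relEntropy {q p : ι → ℝ} (hq : ∀ i, 0 ≤ q i)
    (hp : ∀ i, 0 < p i) (hsum : ∑ i, p i = ∑ i, q i) :
    ∑ i, (√(q i) - √(p i)) ^ 2 ≤ relEntropy q p := by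
  calc ∑ i, (√(q i) - √(p i)) ^ 2 ≤ ∑ i, (q i * (log (q i) - log (p i)) - q i + p i) :=
        sum_le_sum fun i _ => sq_sqrt_sub_sqrt_le (hq i) (hp i)
    _ = relEntropy q p := by
        rw [sum_add_distrib, sum_sub_distrib, hsum, sub_add_cancel, relEntropy]

theorem tendsto_of_relEntropy_tendsto_zero {α : Type*} {l : Filter α} {q : ι → ℝ}
    {p : α → ι → ℝ} (hq : ∀ i, 0 ≤ q i) (hp : ∀ a i, 0 < p a i)
    (hsum : ∀ a, ∑ i, p a i = ∑ i, q i)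
    (h : Tendsto (fun a => relEntropy q (p a)) l (𝓝 0)) : Tendsto p l (𝓝 q) := by
  refine tendsto_pi_nhds.2 fun i => ?_
  have hsq : Tendsto (fun a => (√(p a i) - √(q i)) ^ 2) l (𝓝 0) := by
    refine squeeze_zero (fun a => sq_nonneg _) (fun a => ?_) h
    calc (√(p a i) - √(q i)) ^ 2 = (√(q i) - √(p a i)) ^ 2 := by ring
      _ ≤ ∑ j, (√(q j) - √(p a j)) ^ 2 :=
          single_le_sum (f := fun j => (√(q j) - √(p a j)) ^ 2) (fun j _ => sq_nonneg _)
            (mem_univ i)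
      _ ≤ relEntropy q (p a) := sum_sq_sqrt_sub_sqrt_le_relEntropy hq (hp a) (hsum a)
  have hsqrt : Tendsto (fun a => √(p a i)) l (𝓝 (√(q i))) := by
    have := (continuous_sqrt.tendsto 0).comp hsq
    simp only [Function.comp_def, sqrt_sq_eq_abs, sqrt_zero] at this
    exact tendsto_iff_norm_sub_tendsto_zero.2 this
  have := hsqrt.pow 2
  simpa [sq_sqrt (hp _ i).le, sq_sqrt (hq i)] using this

theorem tendsto_relEntropy_nhds_self (q : ι → ℝ) : Tendsto (relEntropy q) (𝓝 q) (𝓝 0) := by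
  rw [← relEntropy_self q]
  refine tendsto_finsetSum _ fun i _ => ?_
  change ContinuousAt (fun y : ι → ℝ => q i * (log (q i) - log (y i))) q
  rcases eq_or_ne (q i) 0 with h | h
  · simp only [h, zero_mul]; exact continuousAt_const
  · exact continuousAt_const.mul (continuousAt_const.sub
      ((continuous_apply i).continuousAt.log h))

theorem relEntropy_smul_right {a b : ι → ℝ} {c : ℝ} (hc : 0 < c) (hab : ∀ i, b i = 0 → a i = 0) :
    relEntropy a (c • b) = relEntropy a b - (∑ i, a i) * log c := by
  rw [relEntropy, relEntropy, sum_mul, ← sum_sub_distrib]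
  refine sum_congr rfl fun i _ => ?_
  rcases eq_or_ne (b i) 0 with h | h
  · simp [hab i h]
  · rw [Pi.smul_apply, smul_eq_mul, log_mul hc.ne' h]
    ring

theorem mul_log_sum_sub_le_relEntropy {a b : ι → ℝ} (ha : ∀ i, 0 ≤ a i) (hb : ∀ i, 0 ≤ b i)
    (hab : ∀ i, b i = 0 → a i = 0) :
    (∑ i, a i) * (log (∑ i, a i) - log (∑ i, b i)) ≤ relEntropy a b := by
  rcases (sum_nonneg fun i _ => ha i).eq_or_lt with hA | hA
  · have ha0 : ∀ i, a i = 0 := fun i => (sum_eq_zero_iff_of_nonneg fun i _ => ha i).1 hA.symm i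
      (mem_univ i)
    simp [relEntropy, ha0]
  obtain ⟨i, -, hai⟩ := (sum_pos_iff_of_nonneg fun i _ => ha i).1 hA
  have hB : 0 < ∑ i, b i := (sum_pos_iff_of_nonneg fun i _ => hb i).2
    ⟨i, mem_univ i, (hb i).lt_of_ne fun h => hai.ne' (hab i h.symm)⟩
  -- Gibbs' inequality against `b` rescaled to the mass of `a`
  have hc : 0 < (∑ i, a i) / ∑ i, b i := div_pos hA hB
  have hgibbs := sum_sub_sum_le_relEntropy (p := ((∑ i, a i) / ∑ i, b i) • b) ha
    (fun i => smul_nonneg hc.le (hb i))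
    (fun i h => hab i ((smul_eq_zero.1 h).resolve_left hc.ne'))
  simp only [Pi.smul_apply, smul_eq_mul, ← mul_sum, div_mul_cancel₀ _ hB.ne', sub_self] at hgibbs
  rw [relEntropy_smul_right hc hab, log_div hA.ne' hB.ne'] at hgibbs
  linarith

theorem relEntropy_vecMul_add_le {κ : Type*} [Fintype κ] {V : Matrix ι κ ℝ}
    (hV0 : ∀ i j, 0 ≤ V i j) (hV1 : ∀ i, ∑ j, V i j = 1) {f : κ → ℝ} (hf0 : ∀ j, 0 ≤ f j)
    {w p : ι → ℝ} (hw : ∀ i, 0 ≤ w i) (hp : ∀ i, 0 < p i) :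
    relEntropy (w ᵥ* V + f) (p ᵥ* V + f) ≤ relEntropy w p := by
  -- the `j`-th output mass as a sum over `Option ι`: `none ↦ f j`, `some i ↦ u i * V i j`
  let a (u : ι → ℝ) (j : κ) (o : Option ι) : ℝ := o.elim (f j) fun i => u i * V i j
  have ha0 : ∀ u, (∀ i, 0 ≤ u i) → ∀ j o, 0 ≤ a u j o := fun u hu j o => by
    cases o
    exacts [hf0 j, mul_nonneg (hu _) (hV0 _ j)]
  have hac : ∀ j o, a p j o = 0 → a w j o = 0 := fun j o => by
    cases o
    exacts [id, fun h => by simp [a, (mul_eq_zero.1 h).resolve_left (hp _).ne']]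
  have hsum : ∀ u j, ∑ o, a u j o = (u ᵥ* V + f) j := fun u j => by
    simp [a, Fintype.sum_option, vecMul, dotProduct, add_comm]
  have hterm : ∀ j, relEntropy (a w j) (a p j) = ∑ i, V i j * (w i * (log (w i) - log (p i))) :=
    fun j => by
    simp only [relEntropy, Fintype.sum_option, a, Option.elim, sub_self, mul_zero, zero_add]
    refine sum_congr rfl fun i _ => ?_
    rcases (hV0 i j).eq_or_lt with h | h
    · simp [← h]
    rcases (hw i).eq_or_lt with h' | h'
    · simp [← h']
    rw [log_mul h'.ne' h.ne', log_mul (hp i).ne' h.ne']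
    ring
  calc relEntropy (w ᵥ* V + f) (p ᵥ* V + f)
      = ∑ j, (∑ o, a w j o) * (log (∑ o, a w j o) - log (∑ o, a p j o)) := by
        simp only [hsum, relEntropy]
    _ ≤ ∑ j, relEntropy (a w j) (a p j) := sum_le_sum fun j _ =>
        mul_log_sum_sub_le_relEntropy (ha0 w hw j) (ha0 p (fun i => (hp i).le) j) (hac j)
    _ = relEntropy w p := by
        rw [sum_congr rfl fun j _ => hterm j, sum_comm]
        simp only [relEntropy, ← sum_mul, hV1, one_mul]

theorem sum_vecMul_add {κ : Type*} [Fintype κ] {V : Matrix ι κ ℝ} (hV1 : ∀ i, ∑ j, V i j = 1)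
    (w : ι → ℝ) (f : κ → ℝ) : ∑ j, (w ᵥ* V + f) j = ∑ i, w i + ∑ j, f j := by
  simp only [Pi.add_apply, sum_add_distrib, vecMul, dotProduct]
  rw [sum_comm]
  simp only [← mul_sum, hV1, mul_one]

theorem vecMul_add_pos {κ : Type*} {V : Matrix ι κ ℝ} (hV0 : ∀ i j, 0 ≤ V i j)
    {f : κ → ℝ} (hf0 : ∀ j, 0 ≤ f j) (hcol : ∀ j, 0 < f j ∨ ∃ i, 0 < V i j) {p : ι → ℝ}
    (hp : ∀ i, 0 < p i) (j : κ) : 0 < (p ᵥ* V + f) j := by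
  have hnn : ∀ i ∈ univ, 0 ≤ p i * V i j := fun i _ => mul_nonneg (hp i).le (hV0 i j)
  rcases hcol j with h | ⟨i, h⟩
  · exact add_pos_of_nonneg_of_pos (sum_nonneg hnn) h
  · exact add_pos_of_pos_of_nonneg
      ((sum_pos_iff_of_nonneg hnn).2 ⟨i, mem_univ i, mul_pos (hp i) h⟩) (hf0 j)

theorem sum_mul_sub_log_le_of_eq_max {a r q p : ι → ℝ} {A : ℝ} (hA : 0 < A)
    (hp : ∀ i, p i = max (r i) (A * exp (a i))) (hqr : ∀ i, r i ≤ q i)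
    (hsum : ∑ i, q i = ∑ i, p i) :
    ∑ i, q i * (a i - log (p i)) ≤ ∑ i, p i * (a i - log (p i)) := by
  -- `log p i ≥ a i + log A`, with equality unless the floor `r i` is active, where `p i ≤ q i`
  have hterm : ∀ i, 0 ≤ (p i - q i) * (a i + log A - log (p i)) := fun i => by
    rcases le_total (r i) (A * exp (a i)) with h | h
    · have hlog : log (p i) = a i + log A := by
        rw [hp i, max_eq_right h, log_mul hA.ne' (exp_pos _).ne', log_exp, add_comm]
      rw [hlog, sub_self, mul_zero]
    · have hpr : p i = r i := by rw [hp i, max_eq_left h]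
      have hlog := log_le_log (by positivity) h
      rw [log_mul hA.ne' (exp_pos _).ne', log_exp, ← hpr] at hlog
      exact mul_nonneg_of_nonpos_of_nonpos (by linarith [hqr i]) (by linarith)
  have hsplit : ∑ i, (p i - q i) * (a i + log A - log (p i))
      = ∑ i, p i * (a i - log (p i)) - ∑ i, q i * (a i - log (p i))
        + (∑ i, p i - ∑ i, q i) * log A := by
    simp only [sub_mul, sum_mul, ← sum_add_distrib, ← sum_sub_distrib]
    exact sum_congr rfl fun i _ => by ring
  have := sum_nonneg fun i (_ : i ∈ univ) => hterm i
  rw [hsplit, hsum, sub_self, zero_mul, add_zero] at this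
  linarith

-- `Ω(r)` of the paper
def squeezedSimplex (r : ι → ℝ) : Set (ι → ℝ) :=
  {q | (∀ i, 0 ≤ q i) ∧ (∀ i, r i ≤ q i) ∧ ∑ i, q i = 1}

theorem isCompact_squeezedSimplex (r : ι → ℝ) : IsCompact (squeezedSimplex r) := by
  refine (isCompact_Icc (a := 0) (b := 1)).of_isClosed_subset ?_ fun q ⟨hq0, _, hq1⟩ =>
    ⟨hq0, fun i => (single_le_sum (fun i _ => hq0 i) (mem_univ i)).trans_eq hq1⟩
  simp only [squeezedSimplex, Set.ofPred_and, Set.ofPred_forall]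
  exact (isClosed_iInter fun i => isClosed_le continuous_const (continuous_apply i)).inter
    ((isClosed_iInter fun i => isClosed_le continuous_const (continuous_apply i)).inter
      (isClosed_eq (continuous_finsetSum _ fun i _ => continuous_apply i) continuous_const))

end

section ArimotoBlahut

variable {m n : ℕ} {V : Matrix (Fin m) (Fin n) ℝ} {f : Fin n → ℝ} {c : Fin m → ℝ}

-- The exponent `cᵢ + ∑ⱼ Vᵢⱼ log Φⱼᵢ` of the update; terms with `V i j = 0` vanish as in the paper,
-- because `0 * log _ = 0`.
noncomputable def abaExponent (V : Matrix (Fin m) (Fin n) ℝ) (f : Fin n → ℝ) (c p : Fin m → ℝ)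
    (i : Fin m) : ℝ :=
  c i + ∑ j, V i j * log (p i * V i j / (f j + ∑ l, p l * V l j))

theorem abaExponent_eq (hV1 : ∀ i, ∑ j, V i j = 1) {p : Fin m → ℝ} (hp : ∀ i, p i ≠ 0)
    (hQ : ∀ j, (p ᵥ* V + f) j ≠ 0) (i : Fin m) :
    abaExponent V f c p i
      = c i + log (p i) - Hent (V i) - ∑ j, V i j * log ((p ᵥ* V + f) j) := by
  have hterm : ∀ j, V i j * log (p i * V i j / (f j + ∑ l, p l * V l j))
      = V i j * log (p i) + V i j * log (V i j) - V i j * log ((p ᵥ* V + f) j) := fun j => by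
    rcases eq_or_ne (V i j) 0 with h | h
    · simp [h]
    have hQj : f j + ∑ l, p l * V l j = (p ᵥ* V + f) j := add_comm _ _
    rw [hQj, log_div (mul_ne_zero (hp i) h) (hQ j), log_mul (hp i) h]
    ring
  simp only [abaExponent, hterm, sum_sub_distrib, sum_add_distrib, ← sum_mul, hV1, one_mul, Hent]
  ring

theorem Ifun_eq_sum_abaExponent_add (hV1 : ∀ i, ∑ j, V i j = 1) {p : Fin m → ℝ}
    (hp : ∀ i, p i ≠ 0) (hQ : ∀ j, (p ᵥ* V + f) j ≠ 0) (w : Fin m → ℝ) :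
    Ifun V f c w = ∑ i, w i * (abaExponent V f c p i - log (w i)) + relEntropy f (p ᵥ* V + f)
      + relEntropy w p - relEntropy (w ᵥ* V + f) (p ᵥ* V + f) := by
  have hswap : ∑ i, w i * ∑ j, V i j * log ((p ᵥ* V + f) j)
      = ∑ j, (w ᵥ* V) j * log ((p ᵥ* V + f) j) := by
    simp only [mul_sum, vecMul, dotProduct, sum_mul, ← mul_assoc]
    exact sum_comm
  simp only [abaExponent_eq hV1 hp hQ, mul_sub, mul_add, sum_sub_distrib, sum_add_distrib, hswap]
  simp only [Ifun, Hent, relEntropy, vecMul, dotProduct, Pi.add_apply, mul_sub, add_mul,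
    sum_sub_distrib, sum_add_distrib, mul_neg, sum_neg_distrib]
  ring

theorem Ifun_le_Ifun_add_relEntropy_sub (hV0 : ∀ i j, 0 ≤ V i j) (hV1 : ∀ i, ∑ j, V i j = 1)
    (hf0 : ∀ j, 0 ≤ f j) {r p p' q : Fin m → ℝ} {A : ℝ} (hp : ∀ i, 0 < p i)
    (hQ : ∀ j, 0 < (p ᵥ* V + f) j) (hA : 0 < A)
    (hp' : ∀ i, p' i = max (r i) (A * exp (abaExponent V f c p i)))
    (hq0 : ∀ i, 0 ≤ q i) (hqr : ∀ i, r i ≤ q i) (hqp : ∑ i, q i = ∑ i, p i)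
    (hqp' : ∑ i, q i = ∑ i, p' i) :
    Ifun V f c q ≤ Ifun V f c p' + relEntropy q p - relEntropy q p' := by
  have hp'pos : ∀ i, 0 < p' i := fun i => (hp' i).symm ▸ lt_max_of_lt_right (by positivity)
  have hvar := sum_mul_sub_log_le_of_eq_max hA hp' hqr hqp'
  have hdata := relEntropy_vecMul_add_le hV0 hV1 hf0 (fun i => (hp'pos i).le) hp
  have hout : 0 ≤ relEntropy (q ᵥ* V + f) (p ᵥ* V + f) :=
    relEntropy_nonneg (fun j => add_nonneg
      (sum_nonneg fun i _ => mul_nonneg (hq0 i) (hV0 i j) : 0 ≤ ∑ i, q i * V i j) (hf0 j)) hQ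
      (by rw [sum_vecMul_add hV1, sum_vecMul_add hV1, hqp])
  have hq : ∑ i, q i * (abaExponent V f c p i - log (q i))
      = ∑ i, q i * (abaExponent V f c p i - log (p' i)) - relEntropy q p' := by
    rw [relEntropy, ← sum_sub_distrib]
    exact sum_congr rfl fun i _ => by ring
  rw [Ifun_eq_sum_abaExponent_add hV1 (fun i => (hp i).ne') (fun j => (hQ j).ne') q,
    Ifun_eq_sum_abaExponent_add hV1 (fun i => (hp i).ne') (fun j => (hQ j).ne') p', hq]
  linarith

theorem continuous_Ifun (V : Matrix (Fin m) (Fin n) ℝ) (f : Fin n → ℝ) (c : Fin m → ℝ) :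
    Continuous (Ifun V f c) := by
  have hmul_log := continuous_mul_log
  unfold Ifun Hent
  fun_prop

end ArimotoBlahut

theorem squeezedABA_monotone_convergence_general {m n : ℕ}
    (V : Matrix (Fin m) (Fin n) ℝ)
    (hV0 : ∀ i j, 0 ≤ V i j) (hV1 : ∀ i, ∑ j, V i j = 1)
    (f : Fin n → ℝ) (hf0 : ∀ j, 0 ≤ f j) (c : Fin m → ℝ)
    (r : Fin m → ℝ)
    (hcol : ∀ j, 0 < f j ∨ ∃ i, 0 < V i j)
    (p : ℕ → Fin m → ℝ) (α : ℕ → ℝ)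
    (hp0pos : ∀ i, 0 < p 0 i) (hp0r : ∀ i, r i ≤ p 0 i) (hp0sum : ∑ i, p 0 i = 1)
    (hα : ∀ t, 0 < α t)
    (hrec : ∀ t i, p (t + 1) i = max (r i)
      (α t * Real.exp (c i + ∑ j, V i j *
        Real.log (p t i * V i j / (f j + ∑ l, p t l * V l j)))))
    (hsum : ∀ t, ∑ i, p (t + 1) i = 1) :
    (∃ plim : Fin m → ℝ, Filter.Tendsto p Filter.atTop (nhds plim))
    ∧ Monotone (fun t => Ifun V f c (p t))
    ∧ Filter.Tendsto (fun t => Ifun V f c (p t)) Filter.atTop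
        (nhds (sSup {x : ℝ | ∃ q : Fin m → ℝ,
          (∀ i, 0 ≤ q i) ∧ (∀ i, r i ≤ q i) ∧ (∑ i, q i = 1) ∧ x = Ifun V f c q})) := by
  have hp1 : ∀ t, ∑ i, p t i = 1 := by rintro (_ | t); exacts [hp0sum, hsum t]
  have hpos : ∀ t i, 0 < p t i := by
    rintro (_ | t) i
    exacts [hp0pos i, (hrec t i).symm ▸ lt_max_of_lt_right (mul_pos (hα t) (exp_pos _))]
  have hpS : ∀ t, p t ∈ squeezedSimplex r := fun t => ⟨fun i => (hpos t i).le, fun i => by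
    rcases t with _ | t
    exacts [hp0r i, (hrec t i).symm ▸ le_max_left _ _], hp1 t⟩
  have hstep : ∀ q ∈ squeezedSimplex r, ∀ t,
      Ifun V f c q ≤ Ifun V f c (p (t + 1)) + relEntropy q (p t) - relEntropy q (p (t + 1)) :=
    fun q ⟨hq0, hqr, hq1⟩ t => Ifun_le_Ifun_add_relEntropy_sub hV0 hV1 hf0 (hpos t)
      (vecMul_add_pos hV0 hf0 hcol (hpos t)) (hα t) (hrec t) hq0 hqr (by rw [hq1, hp1])
      (by rw [hq1, hp1])
  obtain ⟨hlim, hmono, hsup⟩ := three_point_convergence (isCompact_squeezedSimplex r)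
    (continuous_Ifun V f c).continuousOn hpS (fun t => relEntropy_self (p t))
    (fun q hq t => relEntropy_nonneg hq.1 (hpos t) (by rw [hq.2.2, hp1])) hstep
    (fun q _ => tendsto_relEntropy_nhds_self q)
    (fun q hq => tendsto_of_relEntropy_tendsto_zero hq.1 hpos fun t => by rw [hq.2.2, hp1])
  refine ⟨hlim, hmono, ?_⟩
  convert hsup using 3
  ext x
  simp [squeezedSimplex, eq_comm, and_assoc]

/-- Monotonic convergence of the doubly squeezed Arimoto–Blahut algorithm:
the iterates converge, and the objective values increase monotonically to
the supremum of `I(·|V,f,c)` over `Ω(r)`. -/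
theorem squeezedABA_monotone_convergence {m n : ℕ}
    (V : Matrix (Fin m) (Fin n) ℝ)
    (hV0 : ∀ i j, 0 ≤ V i j) (hV1 : ∀ i, ∑ j, V i j = 1)
    (f : Fin n → ℝ) (hf0 : ∀ j, 0 ≤ f j) (c : Fin m → ℝ)
    (r : Fin m → ℝ) (hr0 : ∀ i, 0 ≤ r i) (hr1 : ∑ i, r i < 1)
    (hcol : ∀ j, 0 < f j ∨ ∃ i, 0 < V i j)
    (p : ℕ → Fin m → ℝ) (α : ℕ → ℝ)
    (hp0pos : ∀ i, 0 < p 0 i) (hp0r : ∀ i, r i ≤ p 0 i) (hp0sum : ∑ i, p 0 i = 1)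
    (hα : ∀ t, 0 < α t)
    (hrec : ∀ t i, p (t + 1) i = max (r i)
      (α t * Real.exp (c i + ∑ j, V i j *
        Real.log (p t i * V i j / (f j + ∑ l, p t l * V l j)))))
    (hsum : ∀ t, ∑ i, p (t + 1) i = 1) :
    (∃ plim : Fin m → ℝ, Filter.Tendsto p Filter.atTop (nhds plim))
    ∧ Monotone (fun t => Ifun V f c (p t))
    ∧ Filter.Tendsto (fun t => Ifun V f c (p t)) Filter.atTop
        (nhds (sSup {x : ℝ | ∃ q : Fin m → ℝ,
          (∀ i, 0 ≤ q i) ∧ (∀ i, r i ≤ q i) ∧ (∑ i, q i = 1) ∧ x = Ifun V f c q})) :=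
  squeezedABA_monotone_convergence_general V hV0 hV1 f hf0 c r hcol p α hp0pos hp0r hp0sum hα hrec
    hsum
end

section
/- Let W be an m×n row-stochastic matrix whose rows are not all equal. Let p* ∈ ℝ^m have all entries positive with Σ_i p*_i = 1, and suppose s := p*W has all entries positive. Let D_s and D_{p*} be the diagonal matrices with diagonals s and p*. Then the spectral radius of I_m − W D_s^{-1} W^T D_{p*} is at least Σ_{j=1}^n min_{1≤i≤m} W_{ij}. -/
/-!
Write `B = W D_s⁻¹ Wᵀ D_{p*}` and `μ j = min_i W i j`. The matrix `B` is row-stochastic and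
every row of `B` dominates `v = μ D_s⁻¹ Wᵀ D_{p*}`, whose entries sum to `c = ∑ j, μ j`.
Hence `1 - B i i ≥ c - v i` for every `i`, so `trace (I - B) ≥ (m - 1) c`. As `B 𝟙 = 𝟙`, `0` is
an eigenvalue of `I - B`; the remaining `m - 1` eigenvalues (with multiplicity) add up to
`trace (I - B)`, so one of them has real part, hence modulus, at least `c`.
-/

open Finset Matrix

/-- The spectral radius of a real square matrix: the maximum modulus of its
complex eigenvalues. -/
noncomputable def specRad {m : ℕ} (A : Matrix (Fin m) (Fin m) ℝ) : ℝ :=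
  sSup {x : ℝ | ∃ d : ℂ, d ∈ spectrum ℂ (A.map (fun t : ℝ => (t : ℂ))) ∧
    x = ‖d‖}

namespace Matrix

variable {ι κ : Type*} [Fintype ι]

theorem re_trace_map_ofReal (A : Matrix ι ι ℝ) :
    (A.map (fun t : ℝ => (t : ℂ))).trace.re = A.trace := by
  simp [trace, Complex.re_sum]

theorem vecMul_le_vecMul_of_nonneg {R : Type*} [Semiring R] [PartialOrder R] [IsOrderedRing R]
    {u w : ι → R} {M : Matrix ι κ R} (huw : u ≤ w) (hM : ∀ i k, 0 ≤ M i k) :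
    u ᵥ* M ≤ w ᵥ* M := fun k =>
  sum_le_sum fun i _ => mul_le_mul_of_nonneg_right (huw i) (hM i k)

variable [DecidableEq ι]

open Polynomial in
theorem exists_mem_spectrum_le_re {A : Matrix ι ι ℂ} {μ₀ : ℂ} (hμ₀ : μ₀ ∈ spectrum ℂ A)
    (hι : 1 < Fintype.card ι) {c : ℝ}
    (hc : (Fintype.card ι - 1 : ℝ) * c ≤ (A.trace - μ₀).re) :
    ∃ μ ∈ spectrum ℂ A, c ≤ μ.re := by
  have hμ₀_root : μ₀ ∈ A.charpoly.roots :=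
    (mem_roots A.charpoly_monic.ne_zero).mpr (mem_spectrum_iff_isRoot_charpoly.mp hμ₀)
  set R := A.charpoly.roots.erase μ₀
  have hcard : Multiset.card R = Fintype.card ι - 1 := by
    rw [Multiset.card_erase_of_mem hμ₀_root, splits_iff_card_roots.mp (IsAlgClosed.splits _),
      charpoly_natDegree_eq_dim, Nat.pred_eq_sub_one]
  have hsum : (R.map Complex.re).sum = (A.trace - μ₀).re := by
    rw [trace_eq_sum_roots_charpoly, ← Multiset.sum_erase hμ₀_root, add_sub_cancel_left]
    exact (map_multiset_sum Complex.reAddGroupHom R).symm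
  by_contra! hlt
  have hR : R ≠ 0 := by
    rw [← Multiset.card_pos, hcard]
    omega
  have hR_lt := Multiset.sum_lt_sum_of_nonempty hR fun μ hμ => hlt μ <|
    mem_spectrum_of_isRoot_charpoly (isRoot_of_mem_roots (Multiset.mem_of_mem_erase hμ))
  rw [Multiset.map_const', Multiset.sum_replicate, hcard, hsum, nsmul_eq_mul,
    Nat.cast_sub hι.le, Nat.cast_one] at hR_lt
  exact hR_lt.not_ge hc

theorem zero_mem_spectrum_map_ofReal {A : Matrix ι ι ℝ} {v : ι → ℝ} (hv : v ≠ 0)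
    (hAv : A *ᵥ v = 0) : (0 : ℂ) ∈ spectrum ℂ (A.map (fun t : ℝ => (t : ℂ))) := by
  rw [spectrum.zero_mem_iff, isUnit_iff_isUnit_det, isUnit_iff_ne_zero, not_not]
  have hdet : A.det = 0 := exists_mulVec_eq_zero_iff.mp ⟨v, hv, hAv⟩
  have hdet_map := RingHom.map_det Complex.ofRealHom A
  rw [hdet, map_zero] at hdet_map
  exact hdet_map.symm

theorem card_sub_one_mul_sum_le_trace_one_sub {B : Matrix ι ι ℝ} {v : ι → ℝ}
    (hB : B *ᵥ 1 = 1) (hv : ∀ i k, v k ≤ B i k) :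
    (Fintype.card ι - 1 : ℝ) * ∑ k, v k ≤ (1 - B).trace := by
  have hrow : ∀ i, ∑ k, B i k = 1 := fun i => by
    simpa [mulVec, dotProduct] using congrFun hB i
  have hdiag : ∀ i, B i i - v i ≤ 1 - ∑ k, v k := fun i => by
    rw [← hrow i, ← sum_sub_distrib]
    exact single_le_sum (f := fun k => B i k - v k) (fun k _ => sub_nonneg.mpr (hv i k))
      (mem_univ i)
  calc (Fintype.card ι - 1 : ℝ) * ∑ k, v k = ∑ i, (∑ k, v k - v i) := by
        rw [sum_sub_distrib, sum_const, card_univ, nsmul_eq_mul]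
        ring
    _ ≤ ∑ i, (1 - B i i) := sum_le_sum fun i _ => by linarith [hdiag i]
    _ = (1 - B).trace := by simp [trace, diag]

theorem diagonal_inv_mul_transpose_mul_diagonal_mulVec_one [Fintype κ] [DecidableEq κ]
    {K : Type*} [Field K] {W : Matrix ι κ K} {p : ι → K} {s : κ → K}
    (hs : ∀ j, s j = ∑ i, p i * W i j) (hs0 : ∀ j, s j ≠ 0) :
    (diagonal (fun j => (s j)⁻¹) * Wᵀ * diagonal p) *ᵥ 1 = 1 := by
  ext j
  simp only [mulVec, dotProduct, mul_diagonal, diagonal_mul, transpose_apply, Pi.one_apply,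
    mul_one, mul_assoc, ← mul_sum]
  rw [sum_congr rfl fun i _ => mul_comm (W i j) (p i), ← hs, inv_mul_cancel₀ (hs0 j)]

end Matrix

theorem norm_le_specRad_of_mem_spectrum {m : ℕ} (A : Matrix (Fin m) (Fin m) ℝ) {μ : ℂ}
    (hμ : μ ∈ spectrum ℂ (A.map (fun t : ℝ => (t : ℂ)))) : ‖μ‖ ≤ specRad A := by
  refine le_csSup (((finite_spectrum (A.map (fun t : ℝ => (t : ℂ)))).image
    (‖·‖ : ℂ → ℝ)).bddAbove.mono ?_) ⟨μ, hμ, rfl⟩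
  rintro x ⟨d, hd, rfl⟩
  exact ⟨d, hd, rfl⟩

theorem specRad_lower_bound_general {m n : ℕ}
    (W : Matrix (Fin m) (Fin n) ℝ)
    (hW0 : ∀ i j, 0 ≤ W i j) (hW1 : ∀ i, ∑ j, W i j = 1)
    (hne : ∃ i k : Fin m, ∃ j : Fin n, W i j ≠ W k j)
    (pstar : Fin m → ℝ) (hp : ∀ i, 0 < pstar i)
    (s : Fin n → ℝ) (hs : ∀ j, s j = ∑ i, pstar i * W i j)
    (hspos : ∀ j, 0 < s j) :
    ∑ j, (⨅ i, W i j) ≤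
      specRad (1 - W * Matrix.diagonal (fun j => (s j)⁻¹) * Wᵀ *
        Matrix.diagonal pstar) := by
  obtain ⟨i, k, j, hik⟩ := hne
  have hm : 1 < Fintype.card (Fin m) :=
    Fintype.one_lt_card_iff.mpr ⟨i, k, fun h => hik (h ▸ rfl)⟩
  set Q := diagonal (fun j => (s j)⁻¹) * Wᵀ * diagonal pstar
  have hQ1 : Q *ᵥ 1 = 1 :=
    diagonal_inv_mul_transpose_mul_diagonal_mulVec_one hs fun j => (hspos j).ne'
  have hQ0 : ∀ j i, 0 ≤ Q j i := fun j i => by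
    simp only [Q, mul_diagonal, diagonal_mul, transpose_apply]
    have := hspos j; have := hp i; have := hW0 i j
    positivity
  have hWQ1 : (W * Q) *ᵥ 1 = 1 := by
    rw [← mulVec_mulVec, hQ1]
    ext i
    simpa [mulVec, dotProduct] using hW1 i
  set μ : Fin n → ℝ := fun j => ⨅ i, W i j
  have hμWQ : ∀ i k, (μ ᵥ* Q) k ≤ (W * Q) i k := fun i =>
    vecMul_le_vecMul_of_nonneg (fun j => ciInf_le (Finite.bddBelow_range _) i) hQ0
  have hμQ : ∑ k, (μ ᵥ* Q) k = ∑ j, μ j := by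
    rw [← dotProduct_one, ← dotProduct_mulVec, hQ1, dotProduct_one]
  have h0 : (0 : ℂ) ∈ spectrum ℂ ((1 - W * Q).map (fun t : ℝ => (t : ℂ))) :=
    zero_mem_spectrum_map_ofReal (Function.ne_iff.mpr ⟨i, one_ne_zero⟩)
      (by rw [sub_mulVec, one_mulVec, hWQ1, sub_self])
  obtain ⟨ν, hν, hcν⟩ := exists_mem_spectrum_le_re h0 hm (c := ∑ j, μ j) (by
    rw [sub_zero, re_trace_map_ofReal, ← hμQ]
    exact card_sub_one_mul_sum_le_trace_one_sub hWQ1 hμWQ)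
  rw [show W * diagonal (fun j => (s j)⁻¹) * Wᵀ * diagonal pstar = W * Q by
    simp only [Q, Matrix.mul_assoc]]
  exact hcν.trans ((Complex.re_le_norm ν).trans (norm_le_specRad_of_mem_spectrum _ hν))

/-- Corollary 1: the spectral radius of `I_m − W D_s⁻¹ Wᵀ D_{p*}` is at least
`∑_j min_i W_{ij}`, provided the rows of `W` are not all equal. -/
theorem specRad_lower_bound {m n : ℕ}
    (W : Matrix (Fin m) (Fin n) ℝ)
    (hW0 : ∀ i j, 0 ≤ W i j) (hW1 : ∀ i, ∑ j, W i j = 1)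
    (hne : ∃ i k : Fin m, ∃ j : Fin n, W i j ≠ W k j)
    (pstar : Fin m → ℝ) (hp : ∀ i, 0 < pstar i) (hp1 : ∑ i, pstar i = 1)
    (s : Fin n → ℝ) (hs : ∀ j, s j = ∑ i, pstar i * W i j)
    (hspos : ∀ j, 0 < s j) :
    ∑ j, (⨅ i, W i j) ≤
      specRad (1 - W * Matrix.diagonal (fun j => (s j)⁻¹) * Wᵀ *
        Matrix.diagonal pstar) :=
  specRad_lower_bound_general W hW0 hW1 hne pstar hp s hs hspos
end
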